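/- Let H be a finite-dimensional complex inner product space, C a Hermitian operator on H, and E an orthogonal projection with CE = C. Write E = E₊ + E₀ + E₋, where E₊ and E₋ are the orthogonal projections onto the spans of eigenvectors of C with positive and negative eigenvalues respectively, and E₀ = E − E₊ − E₋. Then: (1) an operator D° with 0 ≤ D° ≤ E attains sup{Tr(CD) : 0 ≤ D ≤ E} if and only if E₊ ≤ D° ≤ E₊ + E₀ (equivalently, D° = E₊ + D₀ with 0 ≤ D₀ ≤ E₀); (2) a Hermitian operator B° with B° ≥ 0, B° ≥ C attains inf{Tr(BE) : B ≥ 0, B ≥ C} if and only if B° = C₊ + B₀ with B₀ ≥ 0 and B₀E = 0; in particular, the primal solution is unique (namely D° = E₊) when E = E₊ + E₋, and the dual solution is unique (namely B° = C₊) when E = I. -/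

import Mathlib

open Matrix
open scoped ComplexOrder

noncomputable section

/-- The positive part `C₊ = ∑_{κ i > 0} κ i |χ i⟩⟨χ i|` of a Hermitian operator with
spectral data `(χ, κ)`. -/
noncomputable def posPartM {n : ℕ} (χ : Fin n → (Fin n → ℂ)) (κ : Fin n → ℝ) :
    Matrix (Fin n) (Fin n) ℂ :=
  ∑ i ∈ Finset.univ.filter (fun i => 0 < κ i),
    (κ i : ℂ) • Matrix.vecMulVec (χ i) (star (χ i))

/-- The orthogonal projection `E₊` onto the span of eigenvectors with positive
eigenvalues. -/
noncomputable def posProjM {n : ℕ} (χ : Fin n → (Fin n → ℂ)) (κ : Fin n → ℝ) :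
    Matrix (Fin n) (Fin n) ℂ :=
  ∑ i ∈ Finset.univ.filter (fun i => 0 < κ i), Matrix.vecMulVec (χ i) (star (χ i))

/-- The orthogonal projection `E₋` onto the span of eigenvectors with negative
eigenvalues. -/
noncomputable def negProjM {n : ℕ} (χ : Fin n → (Fin n → ℂ)) (κ : Fin n → ℝ) :
    Matrix (Fin n) (Fin n) ℂ :=
  ∑ i ∈ Finset.univ.filter (fun i => κ i < 0), Matrix.vecMulVec (χ i) (star (χ i))

/-!
Write `C = ∑ κᵢ |χᵢ⟩⟨χᵢ|`, `P = E₊` and `N = E₋`. Since `CE = C`, every `χᵢ` with `κᵢ ≠ 0`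
is fixed by `E`. For `0 ≤ D ≤ E` one has `Tr (C D) = ∑ κᵢ ⟨χᵢ, D χᵢ⟩` with
`0 ≤ ⟨χᵢ, D χᵢ⟩ ≤ ⟨χᵢ, E χᵢ⟩ = 1` whenever `κᵢ ≠ 0`, so `Tr (C D) ≤ ∑_{κᵢ > 0} κᵢ = Tr (C P)`,
with equality iff `D χᵢ = χᵢ` for `κᵢ > 0` and `D χᵢ = 0` for `κᵢ < 0`. These say `D P = P` and
`(E - D) N = N`, which give `P ≤ D ≤ E - N`: for a projection `p` and `a ≥ 0` with `a p = p`,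
`a - p = (1 - p) a (1 - p) ≥ 0`. Conversely `P ≤ D ≤ E - N` pins down `⟨χᵢ, D χᵢ⟩`.

Dually, for `B ≥ 0` and `B ≥ C`,
`Tr (B E) = Tr (C P) + Tr ((B - C) P) + Tr (B (E - P))`, and the trace of a positive matrix
against a projection is nonnegative and vanishes only if their product does. Hence
`Tr (B E) ≥ Tr (C P) = Tr C₊`, with equality iff `B E = C P = C₊`, i.e. iff `B = C₊ + B'` with
`B' ≥ 0` and `B' E = 0`.
-/

open scoped MatrixOrder

lemma IsStarProjection.le_of_mul_eq {R : Type*} [Ring R] [PartialOrder R] [StarRing R]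
    [StarOrderedRing R] {p a c : R} (hp : IsStarProjection p) (ha : 0 ≤ a)
    (hc : IsSelfAdjoint c) (hap : a * p = c) (hcp : c * p = c) : c ≤ a := by
  have hpa : p * a = c := by
    simpa [star_mul, hp.isSelfAdjoint.star_eq, ha.isSelfAdjoint.star_eq, hc.star_eq]
      using congr(star $hap)
  have hconj : star (1 - p) * a * (1 - p) = a - c := by
    rw [star_sub, star_one, hp.isSelfAdjoint.star_eq]
    calc (1 - p) * a * (1 - p) = a - p * a - a * p + p * a * p := by noncomm_ring
      _ = a - c := by rw [hpa, hap, hcp]; abel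
  exact sub_nonneg.mp (hconj ▸ star_left_conjugate_nonneg ha (1 - p))

lemma Complex.re_eq_zero_iff_of_nonneg {z : ℂ} (hz : 0 ≤ z) : z.re = 0 ↔ z = 0 :=
  ⟨fun h => Complex.ext h (Complex.nonneg_iff.mp hz).2.symm, fun h => h ▸ Complex.zero_re⟩

namespace Matrix

variable {m : Type*} [Fintype m]

lemma PosSemidef.mul_eq_zero_of_conjTranspose_mul_mul_eq_zero {B R : Matrix m m ℂ}
    (hB : B.PosSemidef) (h : Rᴴ * B * R = 0) : B * R = 0 := by
  refine ext_iff_mulVec.mpr fun x => ?_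
  have hx : star (R *ᵥ x) ⬝ᵥ B *ᵥ (R *ᵥ x) = 0 := by
    rw [star_mulVec, dotProduct_mulVec, vecMul_vecMul, ← dotProduct_mulVec, mulVec_mulVec, h,
      zero_mulVec, dotProduct_zero]
  rw [← mulVec_mulVec, zero_mulVec]
  exact (hB.dotProduct_mulVec_zero_iff _).mp hx

lemma trace_mul_eq_trace_conjTranspose_mul_mul {X R : Matrix m m ℂ} (hR : IsStarProjection R) :
    (X * R).trace = (Rᴴ * X * R).trace := by
  conv_lhs => rw [← hR.isIdempotentElem.eq, ← Matrix.mul_assoc, trace_mul_cycle]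
  rw [show Rᴴ = R from hR.isSelfAdjoint.star_eq]

lemma PosSemidef.re_trace_mul_nonneg {X R : Matrix m m ℂ} (hX : X.PosSemidef)
    (hR : IsStarProjection R) : 0 ≤ (X * R).trace.re := by
  rw [trace_mul_eq_trace_conjTranspose_mul_mul hR]
  exact (Complex.nonneg_iff.mp (hX.conjTranspose_mul_mul_same R).trace_nonneg).1

lemma PosSemidef.mul_eq_zero_of_re_trace_mul_eq_zero {X R : Matrix m m ℂ} (hX : X.PosSemidef)
    (hR : IsStarProjection R) (h : (X * R).trace.re = 0) : X * R = 0 := by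
  have hXR := hX.conjTranspose_mul_mul_same R
  rw [trace_mul_eq_trace_conjTranspose_mul_mul hR,
    Complex.re_eq_zero_iff_of_nonneg hXR.trace_nonneg, hXR.trace_eq_zero_iff] at h
  exact hX.mul_eq_zero_of_conjTranspose_mul_mul_eq_zero h

def expVal (v : m → ℂ) (M : Matrix m m ℂ) : ℝ := (star v ⬝ᵥ M *ᵥ v).re

lemma expVal_sub (v : m → ℂ) (A B : Matrix m m ℂ) : expVal v (A - B) = expVal v A - expVal v B := by
  simp [expVal, sub_mulVec, dotProduct_sub]

lemma PosSemidef.expVal_nonneg {A : Matrix m m ℂ} (hA : A.PosSemidef) (v : m → ℂ) :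
    0 ≤ expVal v A :=
  hA.re_dotProduct_nonneg v

lemma expVal_le_expVal {A B : Matrix m m ℂ} (h : (B - A).PosSemidef) (v : m → ℂ) :
    expVal v A ≤ expVal v B :=
  sub_nonneg.mp (expVal_sub v B A ▸ h.expVal_nonneg v)

lemma PosSemidef.expVal_eq_zero_iff {A : Matrix m m ℂ} (hA : A.PosSemidef) (v : m → ℂ) :
    expVal v A = 0 ↔ A *ᵥ v = 0 := by
  rw [expVal, Complex.re_eq_zero_iff_of_nonneg (hA.dotProduct_mulVec_nonneg v),
    hA.dotProduct_mulVec_zero_iff]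

lemma expVal_of_mulVec_eq_smul {A : Matrix m m ℂ} {v : m → ℂ} (hv : star v ⬝ᵥ v = 1) {c : ℝ}
    (h : A *ᵥ v = (c : ℂ) • v) : expVal v A = c := by
  simp [expVal, h, dotProduct_smul, hv]

lemma trace_vecMulVec_star_mul (v : m → ℂ) (M : Matrix m m ℂ) :
    (vecMulVec v (star v) * M).trace = star v ⬝ᵥ M *ᵥ v := by
  rw [trace_mul_comm, mul_vecMulVec, trace_vecMulVec, dotProduct_comm]

lemma mulVec_eq_self_of_mul_eq {E C : Matrix m m ℂ} {v : m → ℂ}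
    {c : ℂ} (hEC : E * C = C) (hv : C *ᵥ v = c • v) (hc : c ≠ 0) : E *ᵥ v = v := by
  have h : c • (E *ᵥ v) = c • v := by rw [← mulVec_smul, ← hv, mulVec_mulVec, hEC]
  exact smul_right_injective _ hc h

lemma re_trace_mul_eq_add (B C P E : Matrix m m ℂ) :
    (B * E).trace.re = (C * P).trace.re + ((B - C) * P).trace.re + (B * (E - P)).trace.re := by
  simp only [sub_mul, mul_sub, trace_sub, Complex.sub_re]
  ring

lemma re_trace_mul_le_re_trace_mul {B C P E : Matrix m m ℂ} (hP : IsStarProjection P)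
    (hEP : IsStarProjection (E - P)) (hB : B.PosSemidef) (hBC : (B - C).PosSemidef) :
    (C * P).trace.re ≤ (B * E).trace.re := by
  rw [re_trace_mul_eq_add B C P E]
  linarith [hBC.re_trace_mul_nonneg hP, hB.re_trace_mul_nonneg hEP]

lemma re_trace_mul_eq_re_trace_mul_iff {B C P E : Matrix m m ℂ} (hP : IsStarProjection P)
    (hEP : IsStarProjection (E - P)) (hB : B.PosSemidef) (hBC : (B - C).PosSemidef) :
    (B * E).trace.re = (C * P).trace.re ↔ B * E = C * P := by
  refine ⟨fun h => ?_, fun h => by rw [h]⟩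
  have h₁ := hBC.re_trace_mul_nonneg hP
  have h₂ := hB.re_trace_mul_nonneg hEP
  rw [re_trace_mul_eq_add B C P E] at h
  have hBP : (B - C) * P = 0 := hBC.mul_eq_zero_of_re_trace_mul_eq_zero hP (by linarith)
  have hBEP : B * (E - P) = 0 := hB.mul_eq_zero_of_re_trace_mul_eq_zero hEP (by linarith)
  rw [sub_mul, sub_eq_zero] at hBP
  rw [mul_sub, sub_eq_zero] at hBEP
  rw [hBEP, hBP]

end Matrix

section Frame

variable {m ι : Type*} [Fintype m] {χ : ι → m → ℂ}

def spanProj (χ : ι → m → ℂ) (S : Finset ι) : Matrix m m ℂ :=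
  ∑ i ∈ S, vecMulVec (χ i) (star (χ i))

lemma sum_smul_vecMulVec_mulVec [DecidableEq ι]
    (hON : ∀ i j, star (χ i) ⬝ᵥ χ j = if i = j then 1 else 0) (S : Finset ι) (a : ι → ℂ) (i : ι) :
    (∑ j ∈ S, a j • vecMulVec (χ j) (star (χ j))) *ᵥ χ i = if i ∈ S then a i • χ i else 0 := by
  simp [sum_mulVec, smul_mulVec, vecMulVec_mulVec, hON]

lemma spanProj_mulVec [DecidableEq ι] (hON : ∀ i j, star (χ i) ⬝ᵥ χ j = if i = j then 1 else 0)
    (S : Finset ι) (i : ι) : spanProj χ S *ᵥ χ i = if i ∈ S then χ i else 0 := by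
  simpa [spanProj] using sum_smul_vecMulVec_mulVec hON S 1 i

lemma mul_spanProj (A : Matrix m m ℂ) (S : Finset ι) :
    A * spanProj χ S = ∑ i ∈ S, vecMulVec (A *ᵥ χ i) (star (χ i)) := by
  simp only [spanProj, Finset.mul_sum, mul_vecMulVec]

lemma mul_spanProj_eq_self {A : Matrix m m ℂ} {S : Finset ι} (h : ∀ i ∈ S, A *ᵥ χ i = χ i) :
    A * spanProj χ S = spanProj χ S := by
  rw [mul_spanProj]
  exact Finset.sum_congr rfl fun i hi => by rw [h i hi]

lemma mul_spanProj_eq_zero {A : Matrix m m ℂ} {S : Finset ι} (h : ∀ i ∈ S, A *ᵥ χ i = 0) :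
    A * spanProj χ S = 0 := by
  rw [mul_spanProj]
  exact Finset.sum_eq_zero fun i hi => by rw [h i hi, zero_vecMulVec]

lemma isStarProjection_spanProj [DecidableEq ι]
    (hON : ∀ i j, star (χ i) ⬝ᵥ χ j = if i = j then 1 else 0) (S : Finset ι) :
    IsStarProjection (spanProj χ S) where
  isIdempotentElem :=
    mul_spanProj_eq_self fun i hi => by rw [spanProj_mulVec hON, if_pos hi]
  isSelfAdjoint := by
    simp [IsSelfAdjoint, spanProj, star_sum, star_eq_conjTranspose, conjTranspose_vecMulVec]

lemma expVal_spanProj [DecidableEq ι] (hON : ∀ i j, star (χ i) ⬝ᵥ χ j = if i = j then 1 else 0)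
    (S : Finset ι) (i : ι) : expVal (χ i) (spanProj χ S) = if i ∈ S then 1 else 0 := by
  split_ifs with hi <;> apply expVal_of_mulVec_eq_smul (by rw [hON, if_pos rfl]) <;>
    simp [spanProj_mulVec hON, hi]

lemma posSemidef_sum_smul_vecMulVec {S : Finset ι} {a : ι → ℝ} (ha : ∀ i ∈ S, 0 ≤ a i) :
    (∑ i ∈ S, (a i : ℂ) • vecMulVec (χ i) (star (χ i))).PosSemidef :=
  posSemidef_sum S fun i hi =>
    (posSemidef_vecMulVec_self_star (χ i)).smul (Complex.zero_le_real.mpr (ha i hi))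

end Frame

section Spectral

variable {m ι : Type*} [Fintype m] [Fintype ι] [DecidableEq ι]

structure IsSpectralDecomposition (χ : ι → m → ℂ) (κ : ι → ℝ) (C : Matrix m m ℂ) : Prop where
  orthonormal : ∀ i j, star (χ i) ⬝ᵥ χ j = if i = j then 1 else 0
  eq_sum : C = ∑ i, (κ i : ℂ) • vecMulVec (χ i) (star (χ i))

namespace IsSpectralDecomposition

variable {χ : ι → m → ℂ} {κ : ι → ℝ} {C : Matrix m m ℂ}

lemma isHermitian (hC : IsSpectralDecomposition χ κ C) : C.IsHermitian := by
  simp [IsHermitian, hC.eq_sum, conjTranspose_sum, conjTranspose_vecMulVec]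

lemma mulVec (hC : IsSpectralDecomposition χ κ C) (i : ι) :
    C *ᵥ χ i = (κ i : ℂ) • χ i := by
  rw [hC.eq_sum, sum_smul_vecMulVec_mulVec hC.orthonormal, if_pos (Finset.mem_univ i)]

lemma re_trace_mul (hC : IsSpectralDecomposition χ κ C) (M : Matrix m m ℂ) :
    (C * M).trace.re = ∑ i, κ i * expVal (χ i) M := by
  simp [hC.eq_sum, Finset.sum_mul, trace_sum, smul_mul_assoc, trace_vecMulVec_star_mul, expVal]

end IsSpectralDecomposition

end Spectral

lemma mul_le_mul_ite_pos {k t : ℝ} (ht0 : 0 ≤ t) (ht1 : k ≠ 0 → t ≤ 1) :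
    k * t ≤ k * if 0 < k then 1 else 0 := by
  split_ifs with hk
  · nlinarith [ht1 hk.ne']
  · nlinarith [not_lt.mp hk]

lemma mul_eq_mul_ite_pos_iff {k t : ℝ} :
    (k * t = k * if 0 < k then 1 else 0) ↔ (0 < k → t = 1) ∧ (k < 0 → t = 0) := by
  rcases lt_trichotomy k 0 with hk | rfl | hk
  · simp [hk, hk.ne, hk.not_gt]
  · simp
  · simp [hk, hk.ne', hk.not_gt]

section Detection

variable {n : ℕ} {χ : Fin n → Fin n → ℂ} {κ : Fin n → ℝ} {C E : Matrix (Fin n) (Fin n) ℂ}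

lemma posProjM_eq_spanProj : posProjM χ κ = spanProj χ (Finset.univ.filter (0 < κ ·)) := rfl

lemma negProjM_eq_spanProj : negProjM χ κ = spanProj χ (Finset.univ.filter (κ · < 0)) := rfl

lemma posSemidef_posPartM : (posPartM χ κ).PosSemidef :=
  posSemidef_sum_smul_vecMulVec fun _ hi => (Finset.mem_filter.mp hi).2.le

namespace IsSpectralDecomposition

lemma mulVec_eq_self_of_ne_zero (hC : IsSpectralDecomposition χ κ C) (hE : E.IsHermitian)
    (hCE : C * E = C) {i : Fin n} (hκ : κ i ≠ 0) : E *ᵥ χ i = χ i := by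
  have hEC : E * C = C := by
    simpa [conjTranspose_mul, hE.eq, hC.isHermitian.eq] using congrArg conjTranspose hCE
  exact mulVec_eq_self_of_mul_eq hEC (hC.mulVec i) (by exact_mod_cast hκ)

lemma isStarProjection_posProjM (hC : IsSpectralDecomposition χ κ C) :
    IsStarProjection (posProjM χ κ) :=
  isStarProjection_spanProj hC.orthonormal _

lemma isStarProjection_negProjM (hC : IsSpectralDecomposition χ κ C) :
    IsStarProjection (negProjM χ κ) :=
  isStarProjection_spanProj hC.orthonormal _

lemma mul_posProjM (hC : IsSpectralDecomposition χ κ C) (hE : E.IsHermitian) (hCE : C * E = C) :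
    E * posProjM χ κ = posProjM χ κ :=
  mul_spanProj_eq_self fun _ hi =>
    hC.mulVec_eq_self_of_ne_zero hE hCE (Finset.mem_filter.mp hi).2.ne'

lemma posProjM_mul (hC : IsSpectralDecomposition χ κ C) (hE : E.IsHermitian) (hCE : C * E = C) :
    posProjM χ κ * E = posProjM χ κ := by
  have hP : (posProjM χ κ)ᴴ = posProjM χ κ := hC.isStarProjection_posProjM.isSelfAdjoint
  simpa [conjTranspose_mul, hE.eq, hP] using congrArg conjTranspose (hC.mul_posProjM hE hCE)

lemma mul_negProjM (hC : IsSpectralDecomposition χ κ C) (hE : E.IsHermitian) (hCE : C * E = C) :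
    E * negProjM χ κ = negProjM χ κ :=
  mul_spanProj_eq_self fun _ hi =>
    hC.mulVec_eq_self_of_ne_zero hE hCE (Finset.mem_filter.mp hi).2.ne

lemma isStarProjection_sub_posProjM (hC : IsSpectralDecomposition χ κ C)
    (hE : IsStarProjection E) (hCE : C * E = C) : IsStarProjection (E - posProjM χ κ) :=
  hC.isStarProjection_posProjM.sub_of_mul_eq_right hE (hC.mul_posProjM hE.isSelfAdjoint hCE)

lemma expVal_posProjM (hC : IsSpectralDecomposition χ κ C) (i : Fin n) :
    expVal (χ i) (posProjM χ κ) = if 0 < κ i then 1 else 0 := by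
  simp [posProjM_eq_spanProj, expVal_spanProj hC.orthonormal]

lemma expVal_negProjM (hC : IsSpectralDecomposition χ κ C) (i : Fin n) :
    expVal (χ i) (negProjM χ κ) = if κ i < 0 then 1 else 0 := by
  simp [negProjM_eq_spanProj, expVal_spanProj hC.orthonormal]

lemma expVal_eq_one_of_ne_zero (hC : IsSpectralDecomposition χ κ C) (hE : E.IsHermitian)
    (hCE : C * E = C) {i : Fin n} (hκ : κ i ≠ 0) : expVal (χ i) E = 1 :=
  expVal_of_mulVec_eq_smul (by rw [hC.orthonormal, if_pos rfl])
    (by simpa using hC.mulVec_eq_self_of_ne_zero hE hCE hκ)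

lemma mul_posProjM_eq_posPartM (hC : IsSpectralDecomposition χ κ C) :
    C * posProjM χ κ = posPartM χ κ := by
  rw [posProjM_eq_spanProj, mul_spanProj, posPartM]
  simp [hC.mulVec, smul_vecMulVec]

lemma posSemidef_posPartM_sub (hC : IsSpectralDecomposition χ κ C) :
    (posPartM χ κ - C).PosSemidef := by
  have h : posPartM χ κ - C = ∑ i ∈ Finset.univ.filter (¬ 0 < κ ·),
      ((-κ i : ℝ) : ℂ) • vecMulVec (χ i) (star (χ i)) := by
    rw [hC.eq_sum, ← Finset.sum_filter_add_sum_filter_not _ (0 < κ ·), posPartM,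
      sub_add_cancel_left, ← Finset.sum_neg_distrib]
    simp [neg_smul]
  rw [h]
  exact posSemidef_sum_smul_vecMulVec fun i hi =>
    neg_nonneg.mpr (not_lt.mp (Finset.mem_filter.mp hi).2)

lemma expVal_le_one (hC : IsSpectralDecomposition χ κ C) (hE : E.IsHermitian) (hCE : C * E = C)
    {D : Matrix (Fin n) (Fin n) ℂ} (hED : (E - D).PosSemidef) {i : Fin n} (hκ : κ i ≠ 0) :
    expVal (χ i) D ≤ 1 :=
  hC.expVal_eq_one_of_ne_zero hE hCE hκ ▸ expVal_le_expVal hED _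

lemma mul_expVal_le (hC : IsSpectralDecomposition χ κ C) (hE : E.IsHermitian) (hCE : C * E = C)
    {D : Matrix (Fin n) (Fin n) ℂ} (hD : D.PosSemidef) (hED : (E - D).PosSemidef) (i : Fin n) :
    κ i * expVal (χ i) D ≤ κ i * expVal (χ i) (posProjM χ κ) := by
  rw [hC.expVal_posProjM]
  exact mul_le_mul_ite_pos (hD.expVal_nonneg _) (hC.expVal_le_one hE hCE hED)

lemma re_trace_mul_le (hC : IsSpectralDecomposition χ κ C) (hE : E.IsHermitian) (hCE : C * E = C)
    {D : Matrix (Fin n) (Fin n) ℂ} (hD : D.PosSemidef) (hED : (E - D).PosSemidef) :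
    (C * D).trace.re ≤ (C * posProjM χ κ).trace.re := by
  simp only [hC.re_trace_mul]
  exact Finset.sum_le_sum fun i _ => hC.mul_expVal_le hE hCE hD hED i

lemma re_trace_mul_eq_iff (hC : IsSpectralDecomposition χ κ C) (hE : E.IsHermitian)
    (hCE : C * E = C) {D : Matrix (Fin n) (Fin n) ℂ} (hD : D.PosSemidef)
    (hED : (E - D).PosSemidef) :
    (C * D).trace.re = (C * posProjM χ κ).trace.re ↔
      (∀ i, 0 < κ i → expVal (χ i) D = 1) ∧ (∀ i, κ i < 0 → expVal (χ i) D = 0) := by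
  simp only [hC.re_trace_mul]
  rw [Finset.sum_eq_sum_iff_of_le fun i _ => hC.mul_expVal_le hE hCE hD hED i]
  simp only [Finset.mem_univ, true_implies, hC.expVal_posProjM, ← forall_and]
  exact forall_congr' fun _ => mul_eq_mul_ite_pos_iff

lemma mul_posProjM_eq_self_of_expVal (hC : IsSpectralDecomposition χ κ C) (hE : E.IsHermitian)
    (hCE : C * E = C) {D : Matrix (Fin n) (Fin n) ℂ} (hED : (E - D).PosSemidef)
    (hpos : ∀ i, 0 < κ i → expVal (χ i) D = 1) : D * posProjM χ κ = posProjM χ κ :=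
  mul_spanProj_eq_self fun i hi => by
    have hκ := (Finset.mem_filter.mp hi).2
    have h0 : expVal (χ i) (E - D) = 0 := by
      rw [expVal_sub, hC.expVal_eq_one_of_ne_zero hE hCE hκ.ne', hpos i hκ, sub_self]
    have hv := (hED.expVal_eq_zero_iff _).mp h0
    rw [sub_mulVec, sub_eq_zero, hC.mulVec_eq_self_of_ne_zero hE hCE hκ.ne'] at hv
    exact hv.symm

lemma expVal_eq_one_and_eq_zero_iff (hC : IsSpectralDecomposition χ κ C) (hE : E.IsHermitian)
    (hCE : C * E = C) {D : Matrix (Fin n) (Fin n) ℂ} (hD : D.PosSemidef)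
    (hED : (E - D).PosSemidef) :
    ((∀ i, 0 < κ i → expVal (χ i) D = 1) ∧ (∀ i, κ i < 0 → expVal (χ i) D = 0)) ↔
      (D - posProjM χ κ).PosSemidef ∧ (E - negProjM χ κ - D).PosSemidef := by
  constructor
  · rintro ⟨hpos, hneg⟩
    have hDP := hC.mul_posProjM_eq_self_of_expVal hE hCE hED hpos
    have hDN : D * negProjM χ κ = 0 := mul_spanProj_eq_zero fun i hi =>
      (hD.expVal_eq_zero_iff _).mp (hneg i (Finset.mem_filter.mp hi).2)
    have hP := hC.isStarProjection_posProjM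
    have hN := hC.isStarProjection_negProjM
    refine ⟨Matrix.le_iff.mp (hP.le_of_mul_eq hD.nonneg hP.isSelfAdjoint hDP hP.isIdempotentElem),
      sub_right_comm E _ D ▸ Matrix.le_iff.mp (hN.le_of_mul_eq hED.nonneg hN.isSelfAdjoint ?_
        hN.isIdempotentElem)⟩
    rw [sub_mul, hDN, sub_zero, hC.mul_negProjM hE hCE]
  · rintro ⟨hPD, hDN⟩
    have hlower := fun i => expVal_le_expVal hPD (χ i)
    have hupper := fun i => expVal_le_expVal hDN (χ i)
    simp only [expVal_sub, hC.expVal_posProjM, hC.expVal_negProjM] at hlower hupper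
    refine ⟨fun i hκ => ?_, fun i hκ => ?_⟩
    · have h1 := hlower i
      have h2 := hupper i
      rw [if_pos hκ] at h1
      rw [if_neg hκ.not_gt, hC.expVal_eq_one_of_ne_zero hE hCE hκ.ne'] at h2
      linarith
    · have h1 := hlower i
      have h2 := hupper i
      rw [if_neg hκ.not_gt] at h1
      rw [if_pos hκ, hC.expVal_eq_one_of_ne_zero hE hCE hκ.ne] at h2
      linarith

lemma primal_optimal_iff (hC : IsSpectralDecomposition χ κ C) (hE : IsStarProjection E)
    (hCE : C * E = C) {D₀ : Matrix (Fin n) (Fin n) ℂ} (hD₀ : D₀.PosSemidef)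
    (hED₀ : (E - D₀).PosSemidef) :
    (∀ D : Matrix (Fin n) (Fin n) ℂ, D.PosSemidef → (E - D).PosSemidef →
        (C * D).trace.re ≤ (C * D₀).trace.re) ↔
      (D₀ - posProjM χ κ).PosSemidef ∧ (E - negProjM χ κ - D₀).PosSemidef := by
  have hP := nonneg_iff_posSemidef.mp hC.isStarProjection_posProjM.nonneg
  have hEP := nonneg_iff_posSemidef.mp (hC.isStarProjection_sub_posProjM hE hCE).nonneg
  rw [← hC.expVal_eq_one_and_eq_zero_iff hE.isSelfAdjoint hCE hD₀ hED₀,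
    ← hC.re_trace_mul_eq_iff hE.isSelfAdjoint hCE hD₀ hED₀]
  exact ⟨fun h => le_antisymm (hC.re_trace_mul_le hE.isSelfAdjoint hCE hD₀ hED₀) (h _ hP hEP),
    fun h D hD hED => h ▸ hC.re_trace_mul_le hE.isSelfAdjoint hCE hD hED⟩

lemma dual_optimal_iff (hC : IsSpectralDecomposition χ κ C) (hE : IsStarProjection E)
    (hCE : C * E = C) {B₀ : Matrix (Fin n) (Fin n) ℂ} (hB₀ : B₀.PosSemidef)
    (hB₀C : (B₀ - C).PosSemidef) :
    (∀ B : Matrix (Fin n) (Fin n) ℂ, B.PosSemidef → (B - C).PosSemidef →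
        (B₀ * E).trace.re ≤ (B * E).trace.re) ↔
      ∃ B' : Matrix (Fin n) (Fin n) ℂ, B'.PosSemidef ∧ B' * E = 0 ∧ B₀ = posPartM χ κ + B' := by
  have hP := hC.isStarProjection_posProjM
  have hEP := hC.isStarProjection_sub_posProjM hE hCE
  have hCP := hC.mul_posProjM_eq_posPartM
  have hCpE : posPartM χ κ * E = posPartM χ κ := by
    rw [← hCP, mul_assoc, hC.posProjM_mul hE.isSelfAdjoint hCE]
  have hbound : ∀ B : Matrix (Fin n) (Fin n) ℂ, B.PosSemidef → (B - C).PosSemidef →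
      (C * posProjM χ κ).trace.re ≤ (B * E).trace.re :=
    fun B hB hBC => re_trace_mul_le_re_trace_mul hP hEP hB hBC
  trans B₀ * E = posPartM χ κ
  · rw [← hCP, ← re_trace_mul_eq_re_trace_mul_iff hP hEP hB₀ hB₀C]
    refine ⟨fun h => le_antisymm ?_ (hbound B₀ hB₀ hB₀C), fun h B hB hBC => h ▸ hbound B hB hBC⟩
    simpa [hCpE, hCP] using h _ posSemidef_posPartM hC.posSemidef_posPartM_sub
  · refine ⟨fun h => ⟨B₀ - posPartM χ κ, ?_, by rw [sub_mul, h, hCpE, sub_self],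
      (add_sub_cancel _ _).symm⟩, ?_⟩
    · have hCpP : posPartM χ κ * posProjM χ κ = posPartM χ κ := by
        rw [← hCP, mul_assoc, hP.isIdempotentElem.eq]
      have hB₀P : B₀ * posProjM χ κ = posPartM χ κ := by
        rw [← hC.mul_posProjM hE.isSelfAdjoint hCE, ← mul_assoc, h, hCpP]
      exact le_iff.mp (hP.le_of_mul_eq hB₀.nonneg posSemidef_posPartM.isHermitian hB₀P hCpP)
    · rintro ⟨B', -, hB'E, rfl⟩
      rw [add_mul, hB'E, add_zero, hCpE]

end IsSpectralDecomposition

end Detection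

/-- Characterization of all solutions of the optimal detection problem and its dual:
with `E = E₊ + E₀ + E₋`, an admissible `D₀` is optimal iff `E₊ ≤ D₀ ≤ E₊ + E₀`
(equivalently `D₀ = E₊ + D'` with `0 ≤ D' ≤ E₀`); an admissible dual `B₀` is optimal iff
`B₀ = C₊ + B'` with `B' ≥ 0`, `B' E = 0`; uniqueness holds in the stated degenerate
cases. -/
theorem optimal_detection_solutions {n : ℕ}
    (E C : Matrix (Fin n) (Fin n) ℂ)
    (χ : Fin n → (Fin n → ℂ)) (κ : Fin n → ℝ)
    (hON : ∀ i j, star (χ i) ⬝ᵥ χ j = if i = j then 1 else 0)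
    (hspec : C = ∑ i, (κ i : ℂ) • Matrix.vecMulVec (χ i) (star (χ i)))
    (hE : E.IsHermitian) (hEproj : E * E = E) (hCE : C * E = C) :
    (∀ D₀ : Matrix (Fin n) (Fin n) ℂ, D₀.PosSemidef → (E - D₀).PosSemidef →
      ((∀ D : Matrix (Fin n) (Fin n) ℂ, D.PosSemidef → (E - D).PosSemidef →
          ((C * D).trace).re ≤ ((C * D₀).trace).re) ↔
        ((D₀ - posProjM χ κ).PosSemidef ∧
          (posProjM χ κ + (E - posProjM χ κ - negProjM χ κ) - D₀).PosSemidef))) ∧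
    (∀ D₀ : Matrix (Fin n) (Fin n) ℂ, D₀.PosSemidef → (E - D₀).PosSemidef →
      ((∀ D : Matrix (Fin n) (Fin n) ℂ, D.PosSemidef → (E - D).PosSemidef →
          ((C * D).trace).re ≤ ((C * D₀).trace).re) ↔
        (∃ D' : Matrix (Fin n) (Fin n) ℂ, D'.PosSemidef ∧
          ((E - posProjM χ κ - negProjM χ κ) - D').PosSemidef ∧
          D₀ = posProjM χ κ + D'))) ∧
    (∀ B₀ : Matrix (Fin n) (Fin n) ℂ, B₀.PosSemidef → (B₀ - C).PosSemidef →
      ((∀ B : Matrix (Fin n) (Fin n) ℂ, B.PosSemidef → (B - C).PosSemidef →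
          ((B₀ * E).trace).re ≤ ((B * E).trace).re) ↔
        (∃ B' : Matrix (Fin n) (Fin n) ℂ, B'.PosSemidef ∧ B' * E = 0 ∧
          B₀ = posPartM χ κ + B'))) ∧
    (E = posProjM χ κ + negProjM χ κ →
      ∀ D₀ : Matrix (Fin n) (Fin n) ℂ, D₀.PosSemidef → (E - D₀).PosSemidef →
        (∀ D : Matrix (Fin n) (Fin n) ℂ, D.PosSemidef → (E - D).PosSemidef →
          ((C * D).trace).re ≤ ((C * D₀).trace).re) →
        D₀ = posProjM χ κ) ∧
    (E = 1 →
      ∀ B₀ : Matrix (Fin n) (Fin n) ℂ, B₀.PosSemidef → (B₀ - C).PosSemidef →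
        (∀ B : Matrix (Fin n) (Fin n) ℂ, B.PosSemidef → (B - C).PosSemidef →
          ((B₀ * E).trace).re ≤ ((B * E).trace).re) →
        B₀ = posPartM χ κ) := by
  have hC : IsSpectralDecomposition χ κ C := ⟨hON, hspec⟩
  have hEp : IsStarProjection E := ⟨hEproj, hE⟩
  have hE₀ : posProjM χ κ + (E - posProjM χ κ - negProjM χ κ) = E - negProjM χ κ := by abel
  have primal := fun (D₀ : Matrix (Fin n) (Fin n) ℂ) (hD₀ : D₀.PosSemidef) hED₀ =>
    hC.primal_optimal_iff hEp hCE hD₀ hED₀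
  refine ⟨fun D₀ hD₀ hED₀ => hE₀ ▸ primal D₀ hD₀ hED₀, fun D₀ hD₀ hED₀ => ?_,
    fun B₀ hB₀ hB₀C => hC.dual_optimal_iff hEp hCE hB₀ hB₀C, fun hPN D₀ hD₀ hED₀ hopt => ?_,
    fun h1 B₀ hB₀ hB₀C hopt => ?_⟩
  · rw [primal D₀ hD₀ hED₀]
    refine ⟨fun ⟨hPD, hDN⟩ => ⟨D₀ - posProjM χ κ, hPD, ?_, (add_sub_cancel _ _).symm⟩, ?_⟩
    · convert hDN using 1; abel
    · rintro ⟨D', hD', hDE, rfl⟩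
      refine ⟨by rwa [add_sub_cancel_left], ?_⟩
      convert hDE using 1; abel
  · obtain ⟨hPD, hDN⟩ := (primal D₀ hD₀ hED₀).mp hopt
    rw [hPN, add_sub_cancel_right] at hDN
    exact le_antisymm (le_iff.mpr hDN) (le_iff.mpr hPD)
  · obtain ⟨B', -, hB'E, rfl⟩ := (hC.dual_optimal_iff hEp hCE hB₀ hB₀C).mp hopt
    rw [h1, mul_one] at hB'E
    rw [hB'E, add_zero]
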